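/- arXiv:1910.11439 — 2 statements merged into one kernel-verified Lean document; each statement's English description precedes it below -/
import Mathlib

section
/- For a, b, N0, h > 0, define V(p) = a * Real.log (1 + p*h/N0) − b*p. Then the maximum value V(p*) with p* = max (a/b − N0/h) 0 equals a * Real.log (a*h/(b*N0)) − a + b*N0/h when a*h > b*N0, and 0 otherwise, and this maximum value is a strictly increasing function of h on (b*N0/a, ∞). -/
theorem stmt_12 (a b N0 : ℝ) (ha : 0 < a) (hb : 0 < b) (hN : 0 < N0) :
    (∀ h : ℝ, 0 < h →
      a * Real.log (1 + (max (a / b - N0 / h) 0) * h / N0) - b * (max (a / b - N0 / h) 0)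
        = if b * N0 < a * h then a * Real.log (a * h / (b * N0)) - a + b * N0 / h else 0) ∧
    StrictMonoOn (fun h : ℝ => a * Real.log (a * h / (b * N0)) - a + b * N0 / h)
      (Set.Ioi (b * N0 / a)) := by
  have hbN : 0 < b * N0 := mul_pos hb hN
  constructor
  · intro h hh
    rcases lt_or_ge (b * N0) (a * h) with hc | hc
    · rw [if_pos hc]
      have hpos : 0 ≤ a / b - N0 / h := by
        rw [sub_nonneg, div_le_div_iff₀ hh hb]
        nlinarith
      rw [max_eq_left hpos]
      have h1 : 1 + (a / b - N0 / h) * h / N0 = a * h / (b * N0) := by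
        field_simp
        ring
      rw [h1, mul_sub]
      field_simp
      ring
    · rw [if_neg (not_lt.mpr hc)]
      have hneg : a / b - N0 / h ≤ 0 := by
        rw [sub_nonpos, div_le_div_iff₀ hb hh]
        nlinarith
      rw [max_eq_right hneg]
      simp
  · have key : ∀ x : ℝ, b * N0 / a < x →
        HasDerivAt (fun h : ℝ => a * Real.log (a * h / (b * N0)) - a + b * N0 / h)
          (a * ((a / (b * N0)) / (a * x / (b * N0))) +
            (0 * x - b * N0 * 1) / x ^ 2) x := by
      intro x hx
      have hx0 : 0 < x := lt_trans (div_pos hbN ha) hx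
      have hne : a * x / (b * N0) ≠ 0 := by positivity
      have h1 : HasDerivAt (fun h : ℝ => a * h / (b * N0)) (a / (b * N0)) x := by
        simpa using ((hasDerivAt_id x).const_mul a).div_const (b * N0)
      have h2 := (h1.log hne).const_mul a
      have h3 : HasDerivAt (fun h : ℝ => b * N0 / h)
          ((0 * x - b * N0 * 1) / x ^ 2) x :=
        (hasDerivAt_const x (b * N0)).div (hasDerivAt_id x) (ne_of_gt hx0)
      exact (h2.sub_const a).add h3
    apply strictMonoOn_of_deriv_pos (convex_Ioi _)
    · exact fun x hx => ((key x hx).continuousAt).continuousWithinAt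
    · intro x hx
      rw [interior_Ioi] at hx
      have hx0 : 0 < x := lt_trans (div_pos hbN ha) hx
      have hax : b * N0 < a * x := (div_lt_iff₀' ha).mp hx
      rw [(key x hx).deriv]
      have : a * ((a / (b * N0)) / (a * x / (b * N0))) +
          (0 * x - b * N0 * 1) / x ^ 2 = (a * x - b * N0) / x ^ 2 := by
        field_simp
        ring
      rw [this]
      exact div_pos (by linarith) (by positivity)
end

section
/- For B, h, N0, ζ, pc > 0, the offloading efficiency p ↦ B * Real.log (1 + p*h/N0) / (ζ*p + pc) on (0, ∞) has a unique stationary point p* characterized by h/(N0 + p*h) * (ζ*p + pc) = ζ * Real.log (1 + p*h/N0), and the function is strictly quasiconcave (increasing before p*, decreasing after). -/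
/-!
Writing η(p) = B log(1 + p h/N0) / (ζ p + pc), one has
η'(p) = B g(p) / (ζ p + pc)², where g(p) = h (ζ p + pc)/(N0 + p h) - ζ log(1 + p h/N0).
The gap g has derivative -h² (ζ p + pc)/(N0 + p h)² < 0, starts at g 0 = pc h/N0 > 0 and tends
to -∞ (its first term stays below ζ + pc h/N0). So g has exactly one zero p*, and η' is
positive before p* and negative after it.
-/

open Real Set

lemma exists_pos_zero_of_strictAntiOn_Ici {g : ℝ → ℝ} (hcont : ContinuousOn g (Ici 0))
    (hanti : StrictAntiOn g (Ici 0)) (h0 : 0 < g 0) {b : ℝ} (hb : 0 ≤ b) (hgb : g b < 0) :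
    ∃ p, 0 < p ∧ g p = 0 ∧ ∀ q, 0 < q → g q = 0 → q = p := by
  obtain ⟨p, hpI, hgp⟩ :=
    intermediate_value_Icc' hb (hcont.mono Icc_subset_Ici_self) ⟨hgb.le, h0.le⟩
  have hp : 0 < p := lt_of_le_of_ne hpI.1 (by rintro rfl; exact h0.ne' hgp)
  exact ⟨p, hp, hgp, fun q hq hgq ↦ hanti.injOn hq.le hp.le (hgq.trans hgp.symm)⟩

lemma strictMonoOn_Ioc_and_strictAntiOn_Ici_of_hasDerivAt {f g w : ℝ → ℝ} {p : ℝ}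
    (hp : 0 < p) (hf : ∀ x, 0 < x → HasDerivAt f (w x * g x) x) (hw : ∀ x, 0 < x → 0 < w x)
    (hg : StrictAntiOn g (Ioi 0)) (hgp : g p = 0) :
    StrictMonoOn f (Ioc 0 p) ∧ StrictAntiOn f (Ici p) := by
  have hcont : ∀ s ⊆ Ioi (0 : ℝ), ContinuousOn f s := fun s hs x hx ↦
    (hf x (hs hx)).continuousAt.continuousWithinAt
  constructor
  · refine strictMonoOn_of_deriv_pos (convex_Ioc 0 p) (hcont _ Ioc_subset_Ioi_self) ?_
    intro x hx
    rw [interior_Ioc] at hx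
    have hgx : 0 < g x := hgp ▸ hg hx.1 hp hx.2
    rw [(hf x hx.1).deriv]
    exact mul_pos (hw x hx.1) hgx
  · have hsub : Ici p ⊆ Ioi 0 := Ici_subset_Ioi.mpr hp
    refine strictAntiOn_of_deriv_neg (convex_Ici p) (hcont _ hsub) ?_
    intro x hx
    rw [interior_Ici] at hx
    have hx0 : 0 < x := hp.trans hx
    have hgx : g x < 0 := hgp ▸ hg hp hx0 hx
    rw [(hf x hx0).deriv]
    exact mul_neg_of_pos_of_neg (hw x hx0) hgx

section Gap

variable {h N0 ζ pc : ℝ}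

noncomputable def stationarityGap (h N0 ζ pc x : ℝ) : ℝ :=
  h / (N0 + x * h) * (ζ * x + pc) - ζ * log (1 + x * h / N0)

lemma hasDerivAt_log_one_add_mul_div (hh : 0 < h) (hN : 0 < N0) {x : ℝ} (hx : 0 ≤ x) :
    HasDerivAt (fun y ↦ log (1 + y * h / N0)) (h / (N0 + x * h)) x := by
  have hu : HasDerivAt (fun y ↦ 1 + y * h / N0) (h / N0) x := by
    simpa using ((hasDerivAt_id x).mul_const h).div_const N0 |>.const_add 1
  convert hu.log (by positivity) using 1
  field_simp

lemma hasDerivAt_stationarityGap (hh : 0 < h) (hN : 0 < N0) {x : ℝ} (hx : 0 ≤ x) :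
    HasDerivAt (stationarityGap h N0 ζ pc) (-(h ^ 2 * (ζ * x + pc)) / (N0 + x * h) ^ 2) x := by
  have hd : 0 < N0 + x * h := by positivity
  have hinv : HasDerivAt (fun y ↦ h / (N0 + y * h)) (-(h * h) / (N0 + x * h) ^ 2) x := by
    refine ((hasDerivAt_const x h).fun_div
      (((hasDerivAt_id' x).mul_const h).const_add N0) hd.ne').congr_deriv ?_
    ring
  have hlin : HasDerivAt (fun y ↦ ζ * y + pc) ζ x := by
    simpa using ((hasDerivAt_id x).const_mul ζ).add_const pc
  refine ((hinv.mul hlin).sub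
    ((hasDerivAt_log_one_add_mul_div hh hN hx).const_mul ζ)).congr_deriv ?_
  field_simp
  ring

lemma strictAntiOn_stationarityGap (hh : 0 < h) (hN : 0 < N0) (hζ : 0 ≤ ζ) (hpc : 0 < pc) :
    StrictAntiOn (stationarityGap h N0 ζ pc) (Ici 0) := by
  refine strictAntiOn_of_deriv_neg (convex_Ici 0)
    (fun x hx ↦ (hasDerivAt_stationarityGap hh hN hx).continuousAt.continuousWithinAt) ?_
  intro x hx
  rw [interior_Ici, mem_Ioi] at hx
  rw [(hasDerivAt_stationarityGap hh hN hx.le).deriv, neg_div, neg_lt_zero]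
  positivity

lemma stationarityGap_zero :
    stationarityGap h N0 ζ pc 0 = pc * h / N0 := by
  simp only [stationarityGap, zero_mul, add_zero, mul_zero, zero_add, zero_div, log_one,
    sub_zero]
  ring

lemma stationarityGap_le (hh : 0 < h) (hN : 0 < N0) (hζ : 0 ≤ ζ) (hpc : 0 < pc) {x : ℝ}
    (hx : 0 ≤ x) :
    stationarityGap h N0 ζ pc x ≤ ζ + pc * h / N0 - ζ * log (1 + x * h / N0) := by
  have hd : 0 < N0 + x * h := by positivity
  have key : h / (N0 + x * h) * (ζ * x + pc) ≤ ζ + pc * h / N0 :=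
    calc h / (N0 + x * h) * (ζ * x + pc)
        = ζ * (x * h / (N0 + x * h)) + pc * (h / (N0 + x * h)) := by ring
      _ ≤ ζ * 1 + pc * (h / N0) := by
        gcongr
        · exact (div_le_one hd).mpr (by linarith)
        · linarith [mul_nonneg hx hh.le]
      _ = ζ + pc * h / N0 := by ring
  unfold stationarityGap
  linarith

/-- At `x = (exp c - 1) N0 / h` with `c = (ζ + pc h/N0)/ζ + 1`, the bound of
`stationarityGap_le` equals `-ζ`. -/
lemma exists_stationarityGap_neg (hh : 0 < h) (hN : 0 < N0) (hζ : 0 < ζ) (hpc : 0 < pc) :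
    ∃ b, 0 ≤ b ∧ stationarityGap h N0 ζ pc b < 0 := by
  set c := (ζ + pc * h / N0) / ζ + 1
  have hc : 0 ≤ c := by positivity
  set b := (exp c - 1) * N0 / h
  have hb : 0 ≤ b := div_nonneg (mul_nonneg (by linarith [one_le_exp hc]) hN.le) hh.le
  have hlog : log (1 + b * h / N0) = c := by
    rw [show 1 + b * h / N0 = exp c by simp only [b]; field_simp; ring, log_exp]
  refine ⟨b, hb, ?_⟩
  have hζc : ζ * c = ζ + pc * h / N0 + ζ := by simp only [c]; field_simp
  have := stationarityGap_le hh hN hζ.le hpc hb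
  rw [hlog] at this
  linarith

lemma hasDerivAt_efficiency (B : ℝ) (hh : 0 < h) (hN : 0 < N0) (hζ : 0 ≤ ζ) (hpc : 0 < pc)
    {x : ℝ} (hx : 0 ≤ x) :
    HasDerivAt (fun y ↦ B * log (1 + y * h / N0) / (ζ * y + pc))
      (B / (ζ * x + pc) ^ 2 * stationarityGap h N0 ζ pc x) x := by
  have hd : 0 < ζ * x + pc := by positivity
  have hlin : HasDerivAt (fun y ↦ ζ * y + pc) ζ x := by
    simpa using ((hasDerivAt_id x).const_mul ζ).add_const pc
  refine (((hasDerivAt_log_one_add_mul_div hh hN hx).const_mul B).fun_div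
    hlin hd.ne').congr_deriv ?_
  simp only [stationarityGap]
  field_simp

end Gap

theorem stmt_15 (B h N0 ζ pc : ℝ) (hB : 0 < B) (hh : 0 < h) (hN : 0 < N0)
    (hζ : 0 < ζ) (hpc : 0 < pc) :
    ∃ p : ℝ, 0 < p ∧
      h / (N0 + p * h) * (ζ * p + pc) = ζ * Real.log (1 + p * h / N0) ∧
      (∀ q : ℝ, 0 < q →
        h / (N0 + q * h) * (ζ * q + pc) = ζ * Real.log (1 + q * h / N0) → q = p) ∧
      StrictMonoOn (fun p : ℝ => B * Real.log (1 + p * h / N0) / (ζ * p + pc))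
        (Set.Ioc 0 p) ∧
      StrictAntiOn (fun p : ℝ => B * Real.log (1 + p * h / N0) / (ζ * p + pc))
        (Set.Ici p) := by
  have hanti := strictAntiOn_stationarityGap hh hN hζ.le hpc
  have hcont : ContinuousOn (stationarityGap h N0 ζ pc) (Ici 0) := fun x hx ↦
    (hasDerivAt_stationarityGap hh hN hx).continuousAt.continuousWithinAt
  have hgap0 : 0 < stationarityGap h N0 ζ pc 0 := by
    rw [stationarityGap_zero]; positivity
  obtain ⟨b, hb, hgb⟩ := exists_stationarityGap_neg hh hN hζ hpc
  obtain ⟨p, hp, hgp, huniq⟩ := exists_pos_zero_of_strictAntiOn_Ici hcont hanti hgap0 hb hgb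
  have hmono := strictMonoOn_Ioc_and_strictAntiOn_Ici_of_hasDerivAt hp
    (fun x hx ↦ hasDerivAt_efficiency B hh hN hζ.le hpc hx.le)
    (fun x hx ↦ div_pos hB (by positivity))
    (hanti.mono Ioi_subset_Ici_self) hgp
  exact ⟨p, hp, sub_eq_zero.mp hgp,
    fun q hq hq' ↦ huniq q hq (sub_eq_zero.mpr hq'), hmono⟩
end
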